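/- arXiv:2203.09117 — 6 statements merged into one kernel-verified Lean document; each statement's English description precedes it below -/
import Mathlib

section
/- Let f : 𝕋 → GLₙ(ℂ) admit a canonical factorization f = f₋ f₊. Define fᵉ : 𝔻² → GLₙ(ℂ) by fᵉ(z) = f₋ᵉ(z̄⁻¹) · f₊ᵉ(z) for z ≠ 0 and fᵉ(0) = f₋ᵉ(∞) · f₊ᵉ(0), where f₊ᵉ, f₋ᵉ are the analytic extensions. Then fᵉ is a well-defined continuous extension of f to the closed unit disk, taking values in invertible matrices, and is independent of the choice of canonical factorization. -/
open Metric

/-- A canonical (right) factorization `f = f₋ f₊` of a nonsingular matrix function on the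
unit circle.  The factor `f₊` extends continuously and invertibly to the closed unit disk,
analytically on the open disk; the factor `f₋` extends continuously and invertibly to the
closed exterior disk including `∞`.  We encode the exterior extension `f₋ᵉ` via the map
`Fm : 𝔻² → GLₙ(ℂ)`, `Fm w = f₋ᵉ(w⁻¹)` (so `Fm 0 = f₋ᵉ(∞)`), which is continuous on the
closed unit disk, analytic on the open disk, and invertible-valued. -/
structure CanonicalFactorization (n : ℕ) (f : ℂ → Matrix (Fin n) (Fin n) ℂ) : Type where
  Fm : ℂ → Matrix (Fin n) (Fin n) ℂ
  Fp : ℂ → Matrix (Fin n) (Fin n) ℂ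
  contOn_m : ContinuousOn Fm (closedBall 0 1)
  contOn_p : ContinuousOn Fp (closedBall 0 1)
  anal_m : ∀ i j, DifferentiableOn ℂ (fun z => Fm z i j) (ball 0 1)
  anal_p : ∀ i j, DifferentiableOn ℂ (fun z => Fp z i j) (ball 0 1)
  unit_m : ∀ z ∈ closedBall (0 : ℂ) 1, IsUnit (Fm z)
  unit_p : ∀ z ∈ closedBall (0 : ℂ) 1, IsUnit (Fp z)
  factor : ∀ z ∈ sphere (0 : ℂ) 1, f z = Fm z⁻¹ * Fp z

/-!
On the circle, `f₋ f₊ = f₋' f₊'` says `f₋'(z̄)⁻¹ f₋(z̄) = f₊'(z) f₊(z)⁻¹`. Each entry of the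
right side is holomorphic on the disk, and each entry of the left side is `φ(z̄) = conj (s z)`
with `s = conj ∘ φ ∘ conj` holomorphic. A holomorphic `p` with `p = conj s` on the boundary keeps
this identity inside: `p + s` and `I * (p - s)` have real boundary values, and the maximum modulus
principle for `exp (± I * ·)` forces a holomorphic function with real boundary values to be real.
So the identity holds on the whole closed disk, which is exactly the independence of
`fᵉ = c.extension` from the factorization; continuity and invertibility of `fᵉ` are immediate.
-/

open Set ComplexConjugate

section MaximumPrinciple

variable {E : Type*} [NormedAddCommGroup E] [NormedSpace ℂ E] [Nontrivial E] {U : Set E}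

theorem DiffContOnCl.im_le_of_forall_mem_frontier {t : E → ℂ} (hU : Bornology.IsBounded U)
    (ht : DiffContOnCl ℂ t U) {C : ℝ} (hC : ∀ z ∈ frontier U, (t z).im ≤ C) {z : E}
    (hz : z ∈ closure U) : (t z).im ≤ C := by
  have norm_exp : ∀ w : ℂ, ‖Complex.exp (-Complex.I * w)‖ = Real.exp w.im := fun w => by
    simp [Complex.norm_exp]
  have hexp : DiffContOnCl ℂ (fun w => Complex.exp (-Complex.I * t w)) U :=
    (show Differentiable ℂ fun w : ℂ => Complex.exp (-Complex.I * w) by fun_prop).comp_diffContOnCl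
      ht
  have := Complex.norm_le_of_forall_mem_frontier_norm_le hU hexp
    (C := Real.exp C) (fun w hw => by rw [norm_exp]; exact Real.exp_le_exp.2 (hC w hw)) hz
  rwa [norm_exp, Real.exp_le_exp] at this

theorem DiffContOnCl.im_eq_zero_of_forall_mem_frontier {t : E → ℂ} (hU : Bornology.IsBounded U)
    (ht : DiffContOnCl ℂ t U) (h : ∀ z ∈ frontier U, (t z).im = 0) {z : E}
    (hz : z ∈ closure U) : (t z).im = 0 := by
  have hle := ht.im_le_of_forall_mem_frontier hU (fun w hw => (h w hw).le) hz
  have hge := ht.neg.im_le_of_forall_mem_frontier hU (C := 0) (fun w hw => by simp [h w hw]) hz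
  simp only [Pi.neg_apply, Complex.neg_im, Left.neg_nonpos_iff] at hge
  exact le_antisymm hle hge

theorem DiffContOnCl.eq_conj_of_forall_mem_frontier {p s : E → ℂ} (hU : Bornology.IsBounded U)
    (hp : DiffContOnCl ℂ p U) (hs : DiffContOnCl ℂ s U)
    (h : ∀ z ∈ frontier U, p z = conj (s z)) {z : E} (hz : z ∈ closure U) :
    p z = conj (s z) := by
  have him := (hp.add hs).im_eq_zero_of_forall_mem_frontier hU
    (fun w hw => by simp [h w hw]) hz
  have hre := ((hp.sub hs).const_smul Complex.I).im_eq_zero_of_forall_mem_frontier hU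
    (fun w hw => by simp [h w hw]) hz
  simp only [Pi.add_apply, Complex.add_im] at him
  simp only [Pi.smul_apply, Pi.sub_apply, smul_eq_mul, Complex.mul_im, Complex.I_re,
    Complex.I_im, Complex.sub_re, zero_mul, one_mul, zero_add] at hre
  exact Complex.ext (by simp only [Complex.conj_re]; linarith)
    (by simp only [Complex.conj_im]; linarith)

end MaximumPrinciple

theorem DiffContOnCl.conj_comp_conj {φ : ℂ → ℂ} {U : Set ℂ} (hU : IsOpen U)
    (hUc : MapsTo conj U U) (hφ : DiffContOnCl ℂ φ U) :
    DiffContOnCl ℂ (conj ∘ φ ∘ conj) U := by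
  refine ⟨fun z hz => ?_, Complex.continuous_conj.comp_continuousOn <|
    hφ.continuousOn.comp Complex.continuous_conj.continuousOn (hUc.closure Complex.continuous_conj)⟩
  simpa using ((hφ.differentiableAt hU (hUc hz)).conj_conj).differentiableWithinAt

section MatrixEntries

variable {𝕜 ι : Type*} [NontriviallyNormedField 𝕜] [Fintype ι] {s : Set 𝕜}
  {F G : 𝕜 → Matrix ι ι 𝕜}

theorem differentiableOn_det_of_entries [DecidableEq ι]
    (hF : ∀ i j, DifferentiableOn 𝕜 (fun z => F z i j) s) :
    DifferentiableOn 𝕜 (fun z => (F z).det) s := by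
  simp only [Matrix.det_apply']
  exact .fun_sum fun σ _ => (DifferentiableOn.fun_finsetProd fun i _ => hF (σ i) i).const_mul _

theorem differentiableOn_adjugate_entry [DecidableEq ι]
    (hF : ∀ i j, DifferentiableOn 𝕜 (fun z => F z i j) s) (i j : ι) :
    DifferentiableOn 𝕜 (fun z => (F z).adjugate i j) s := by
  simp only [Matrix.adjugate_apply]
  refine differentiableOn_det_of_entries fun k l => ?_
  simp only [Matrix.updateRow_apply]
  split_ifs
  · exact differentiableOn_const _
  · exact hF k l

theorem differentiableOn_inv_entry [DecidableEq ι]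
    (hF : ∀ i j, DifferentiableOn 𝕜 (fun z => F z i j) s) (hu : ∀ z ∈ s, IsUnit (F z))
    (i j : ι) : DifferentiableOn 𝕜 (fun z => (F z)⁻¹ i j) s := by
  have hdet : ∀ z ∈ s, (F z).det ≠ 0 := fun z hz =>
    ((Matrix.isUnit_iff_isUnit_det _).mp (hu z hz)).ne_zero
  refine (((differentiableOn_det_of_entries hF).inv hdet).mul
    (differentiableOn_adjugate_entry hF i j)).congr fun z _ => ?_
  rw [Pi.mul_apply, Pi.inv_apply, Matrix.inv_def, Matrix.smul_apply, Ring.inverse_eq_inv',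
    smul_eq_mul]

theorem differentiableOn_mul_entry
    (hF : ∀ i j, DifferentiableOn 𝕜 (fun z => F z i j) s)
    (hG : ∀ i j, DifferentiableOn 𝕜 (fun z => G z i j) s) (i j : ι) :
    DifferentiableOn 𝕜 (fun z => (F z * G z) i j) s := by
  simp only [Matrix.mul_apply]
  exact .fun_sum fun k _ => (hF i k).mul (hG k j)

end MatrixEntries

theorem ContinuousOn.matrix_inv {X R ι : Type*} [TopologicalSpace X] [Field R] [TopologicalSpace R]
    [IsTopologicalDivisionRing R] [Fintype ι] [DecidableEq ι] {s : Set X} {F : X → Matrix ι ι R}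
    (hF : ContinuousOn F s) (hu : ∀ z ∈ s, IsUnit (F z)) :
    ContinuousOn (fun z => (F z)⁻¹) s := fun z hz => by
  refine (continuousAt_matrix_inv _ ?_).comp_continuousWithinAt (hF z hz)
  rw [Ring.inverse_eq_inv']
  exact continuousAt_inv₀ ((Matrix.isUnit_iff_isUnit_det _).mp (hu z hz)).ne_zero

theorem Matrix.inv_mul_eq_mul_inv_iff {ι R : Type*} [Fintype ι] [DecidableEq ι] [CommRing R]
    {A B C D : Matrix ι ι R} (hA : IsUnit A) (hD : IsUnit D) :
    A⁻¹ * B = C * D⁻¹ ↔ B * D = A * C := by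
  have := hA.invertible
  have := hD.invertible
  rw [Matrix.inv_mul_eq_iff_eq_mul_of_invertible, eq_comm, ← Matrix.mul_assoc,
    Matrix.mul_inv_eq_iff_eq_mul_of_invertible, eq_comm]

theorem mapsTo_conj_ball (r : ℝ) : MapsTo conj (ball (0 : ℂ) r) (ball 0 r) := fun z hz => by
  simpa using hz

theorem mapsTo_conj_closedBall (r : ℝ) :
    MapsTo conj (closedBall (0 : ℂ) r) (closedBall 0 r) := fun z hz => by
  simpa using hz

theorem eqOn_closedBall_comp_conj_of_eqOn_sphere {ι : Type*} {Φ Ψ : ℂ → Matrix ι ι ℂ}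
    (hΦc : ContinuousOn Φ (closedBall 0 1))
    (hΦd : ∀ i j, DifferentiableOn ℂ (fun z => Φ z i j) (ball 0 1))
    (hΨc : ContinuousOn Ψ (closedBall 0 1))
    (hΨd : ∀ i j, DifferentiableOn ℂ (fun z => Ψ z i j) (ball 0 1))
    (h : ∀ z ∈ sphere (0 : ℂ) 1, Ψ z = Φ (conj z)) :
    ∀ z ∈ closedBall (0 : ℂ) 1, Ψ z = Φ (conj z) := by
  have entry {F : ℂ → Matrix ι ι ℂ} (hc : ContinuousOn F (closedBall 0 1))
      (hd : ∀ i j, DifferentiableOn ℂ (fun z => F z i j) (ball 0 1)) (i j : ι) :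
      DiffContOnCl ℂ (fun z => F z i j) (ball 0 1) :=
    .mk_ball (hd i j) ((continuous_apply_apply i j).comp_continuousOn hc)
  intro z hz
  ext i j
  have hΦ' := (entry hΦc hΦd i j).conj_comp_conj isOpen_ball (mapsTo_conj_ball 1)
  have := (entry hΨc hΨd i j).eq_conj_of_forall_mem_frontier isBounded_ball hΦ'
    (by simpa [frontier_ball] using fun w hw => congr_fun₂ (h w hw) i j)
    (by rwa [closure_ball _ one_ne_zero])
  simpa using this

namespace CanonicalFactorization

variable {n : ℕ} {f : ℂ → Matrix (Fin n) (Fin n) ℂ}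

def extension (c : CanonicalFactorization n f) (z : ℂ) : Matrix (Fin n) (Fin n) ℂ :=
  c.Fm (conj z) * c.Fp z

theorem continuousOn_extension (c : CanonicalFactorization n f) :
    ContinuousOn c.extension (closedBall 0 1) :=
  (c.contOn_m.comp Complex.continuous_conj.continuousOn (mapsTo_conj_closedBall 1)).mul c.contOn_p

theorem extension_eq_of_mem_sphere (c : CanonicalFactorization n f) {z : ℂ}
    (hz : z ∈ sphere (0 : ℂ) 1) : c.extension z = f z := by
  rw [extension, c.factor z hz, Complex.inv_eq_conj (by simpa using hz)]

theorem isUnit_extension (c : CanonicalFactorization n f) {z : ℂ}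
    (hz : z ∈ closedBall (0 : ℂ) 1) : IsUnit (c.extension z) :=
  (c.unit_m _ (mapsTo_conj_closedBall 1 hz)).mul (c.unit_p z hz)

theorem extension_eq_iff (c c' : CanonicalFactorization n f) {z : ℂ}
    (hz : z ∈ closedBall (0 : ℂ) 1) :
    c.extension z = c'.extension z ↔ (c'.Fm (conj z))⁻¹ * c.Fm (conj z) = c'.Fp z * (c.Fp z)⁻¹ :=
  (Matrix.inv_mul_eq_mul_inv_iff (c'.unit_m _ (mapsTo_conj_closedBall 1 hz))
    (c.unit_p z hz)).symm

theorem extension_eq (c c' : CanonicalFactorization n f) {z : ℂ}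
    (hz : z ∈ closedBall (0 : ℂ) 1) : c.extension z = c'.extension z := by
  have hball : ball (0 : ℂ) 1 ⊆ closedBall 0 1 := ball_subset_closedBall
  refine (c.extension_eq_iff c' hz).mpr (Eq.symm ?_)
  refine eqOn_closedBall_comp_conj_of_eqOn_sphere
    ((c'.contOn_m.matrix_inv c'.unit_m).mul c.contOn_m)
    (differentiableOn_mul_entry
      (differentiableOn_inv_entry c'.anal_m fun w hw => c'.unit_m w (hball hw)) c.anal_m)
    (c'.contOn_p.mul (c.contOn_p.matrix_inv c.unit_p))
    (differentiableOn_mul_entry c'.anal_p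
      (differentiableOn_inv_entry c.anal_p fun w hw => c.unit_p w (hball hw)))
    (fun w hw => Eq.symm ?_) z hz
  exact (c.extension_eq_iff c' (sphere_subset_closedBall hw)).mp
    ((c.extension_eq_of_mem_sphere hw).trans (c'.extension_eq_of_mem_sphere hw).symm)

end CanonicalFactorization

/-- Given a canonical factorization `f = f₋ f₊` of `f : 𝕋 → GLₙ(ℂ)`, the function
`fᵉ(z) = f₋ᵉ(z̄⁻¹) · f₊ᵉ(z)` (here `Fm (conj z) = f₋ᵉ(z̄⁻¹)`, including `z = 0` where it is
`f₋ᵉ(∞) f₊ᵉ(0)`) is a continuous extension of `f` to the closed unit disk, takes invertible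
values, and is independent of the choice of canonical factorization. -/
theorem extension_well_defined {n : ℕ} (f : ℂ → Matrix (Fin n) (Fin n) ℂ)
    (c : CanonicalFactorization n f) :
    ContinuousOn (fun z => c.Fm (starRingEnd ℂ z) * c.Fp z) (closedBall 0 1) ∧
    (∀ z ∈ sphere (0 : ℂ) 1, c.Fm (starRingEnd ℂ z) * c.Fp z = f z) ∧
    (∀ z ∈ closedBall (0 : ℂ) 1, IsUnit (c.Fm (starRingEnd ℂ z) * c.Fp z)) ∧
    (∀ c' : CanonicalFactorization n f, ∀ z ∈ closedBall (0 : ℂ) 1,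
      c.Fm (starRingEnd ℂ z) * c.Fp z = c'.Fm (starRingEnd ℂ z) * c'.Fp z) :=
  ⟨c.continuousOn_extension, fun _ => c.extension_eq_of_mem_sphere, fun _ => c.isUnit_extension,
    fun c' _ => c.extension_eq c'⟩
end

section
/- Let f : 𝕋 → GLₙ(ℂ) admit a canonical factorization f = f₋ f₊ with extension fᵉ : 𝔻² → GLₙ(ℂ), fᵉ(z) = f₋ᵉ(z̄⁻¹) f₊ᵉ(z). Then for every t with 0 < t < 1, the function z ↦ fᵉ(tz) on 𝕋 also admits a canonical factorization, namely z ↦ f₋ᵉ(t⁻¹z) times z ↦ f₊ᵉ(tz). -/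
open Metric

open Set

section ContractingMul

variable {R : Type*} [NonUnitalSeminormedRing R] {a : R}

lemma norm_mul_le_norm_of_norm_le_one (ha : ‖a‖ ≤ 1) (w : R) : ‖a * w‖ ≤ ‖w‖ :=
  (norm_mul_le a w).trans (mul_le_of_le_one_left (norm_nonneg w) ha)

lemma mapsTo_mul_left_closedBall_zero (ha : ‖a‖ ≤ 1) (r : ℝ) :
    MapsTo (a * ·) (closedBall (0 : R) r) (closedBall 0 r) := fun w hw => by
  simpa using (norm_mul_le_norm_of_norm_le_one ha w).trans (by simpa using hw)

lemma mapsTo_mul_left_ball_zero (ha : ‖a‖ ≤ 1) (r : ℝ) :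
    MapsTo (a * ·) (ball (0 : R) r) (ball 0 r) := fun w hw => by
  simpa using (norm_mul_le_norm_of_norm_le_one ha w).trans_lt (by simpa using hw)

end ContractingMul

namespace CanonicalFactorization

variable {n : ℕ} {f : ℂ → Matrix (Fin n) (Fin n) ℂ}

def precomp (c : CanonicalFactorization n f) (φ : ℂ → ℂ) (hφ : Differentiable ℂ φ)
    (hφ_closedBall : MapsTo φ (closedBall 0 1) (closedBall 0 1))
    (hφ_ball : MapsTo φ (ball 0 1) (ball 0 1)) {g : ℂ → Matrix (Fin n) (Fin n) ℂ}
    (hg : ∀ z ∈ sphere (0 : ℂ) 1, g z = c.Fm (φ z⁻¹) * c.Fp (φ z)) :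
    CanonicalFactorization n g where
  Fm := c.Fm ∘ φ
  Fp := c.Fp ∘ φ
  contOn_m := c.contOn_m.comp hφ.continuous.continuousOn hφ_closedBall
  contOn_p := c.contOn_p.comp hφ.continuous.continuousOn hφ_closedBall
  anal_m i j := (c.anal_m i j).comp hφ.differentiableOn hφ_ball
  anal_p i j := (c.anal_p i j).comp hφ.differentiableOn hφ_ball
  unit_m _ hz := c.unit_m _ (hφ_closedBall hz)
  unit_p _ hz := c.unit_p _ (hφ_closedBall hz)
  factor := hg

end CanonicalFactorization

/-- Let `f = f₋ f₊` be a canonical factorization with canonical extension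
`fᵉ(z) = f₋ᵉ(z̄⁻¹) f₊ᵉ(z)` (encoded as `Fm (conj z) * Fp z`).  For every `0 < t < 1`,
the function `z ↦ fᵉ(tz)` on the unit circle again admits a canonical factorization,
namely with minus-factor `z ↦ f₋ᵉ(t⁻¹ z)` (encoded as `Fm (t w)`) and plus-factor
`z ↦ f₊ᵉ(t z)`. -/
theorem rescaled_extension_canonical_factorization {n : ℕ}
    (f : ℂ → Matrix (Fin n) (Fin n) ℂ) (c : CanonicalFactorization n f)
    (t : ℝ) (ht0 : 0 < t) (ht1 : t < 1) :
    ∃ c' : CanonicalFactorization n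
        (fun z => c.Fm (starRingEnd ℂ ((t : ℂ) * z)) * c.Fp ((t : ℂ) * z)),
      c'.Fm = (fun w => c.Fm ((t : ℂ) * w)) ∧ c'.Fp = (fun w => c.Fp ((t : ℂ) * w)) := by
  have ht : ‖(t : ℂ)‖ ≤ 1 := by
    rw [Complex.norm_real, Real.norm_of_nonneg ht0.le]
    exact ht1.le
  refine ⟨c.precomp (fun w => (t : ℂ) * w) (differentiable_id.const_mul _)
    (mapsTo_mul_left_closedBall_zero ht 1) (mapsTo_mul_left_ball_zero ht 1)
    fun z hz => ?_, rfl, rfl⟩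
  rw [map_mul, Complex.conj_ofReal, ← Complex.inv_eq_conj (mem_sphere_zero_iff_norm.mp hz)]
end

section
/- Let f : 𝕋 → GLₙ(ℂ) take values in skew-Hermitian invertible matrices and admit a canonical factorization. Then its canonical extension fᵉ to the closed unit disk takes values in skew-Hermitian invertible matrices. -/
/-!
With `Fm w = f₋ᵉ(w⁻¹)` and `Fp = f₊ᵉ`, the matrix function `P(w) = Fm(w)⁻¹ Fp(w̄)ᴴ` is holomorphic
on the disk and continuous up to the circle; it compares the factorization `f = f₋ f₊` with the
adjoint-reflected one `f = (-f₊*) (f₋*)`. On the circle `f(w̄) = Fm(w) Fp(w̄)`, so `Pᴴ` is the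
congruence `Fm(w)⁻¹ f(w̄) Fm(w)⁻ᴴ` and `P` is skew-Hermitian there. Entrywise this says
`P i j = conj (-P j i)` for two holomorphic functions, which the maximum principle (applied to
`exp` of `±(P i j + P j i)` and `±I (P i j - P j i)`) propagates into the disk. Undoing the
congruence at `w = z̄` gives the skew-Hermitian property of `Fm(z̄) Fp(z)`.
-/

open Metric

open Bornology Complex ComplexConjugate Set

theorem mul_mem_skewAdjoint_iff {R : Type*} [Ring R] [StarRing R] {a b : R} (ha : IsUnit a) :
    a * b ∈ skewAdjoint R ↔ Ring.inverse a * star b ∈ skewAdjoint R := by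
  have star_mem {x : R} (hx : x ∈ skewAdjoint R) : star x ∈ skewAdjoint R := by
    rw [skewAdjoint.mem_iff.mp hx]
    exact neg_mem hx
  have conj_inv : Ring.inverse a * (a * b) * star (Ring.inverse a) =
      star (Ring.inverse a * star b) := by
    rw [star_mul, star_star, Ring.inverse_mul_cancel_left a b ha]
  have conj_self : a * star (Ring.inverse a * star b) * star a = a * b := by
    rw [star_mul, star_star, mul_assoc, mul_assoc, ← star_mul, Ring.mul_inverse_cancel a ha,
      star_one, mul_one]
  constructor
  · intro h
    simpa only [conj_inv, star_star] using star_mem (skewAdjoint.conjugate h (Ring.inverse a))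
  · intro h
    rw [← conj_self]
    exact skewAdjoint.conjugate (star_mem h) a

namespace DiffContOnCl

variable {E : Type*} [NormedAddCommGroup E] [NormedSpace ℂ E] [Nontrivial E] {U : Set E}

theorem re_nonpos_on_closure {g : E → ℂ} (hU : IsBounded U) (hg : DiffContOnCl ℂ g U)
    (hb : ∀ z ∈ frontier U, (g z).re ≤ 0) : ∀ z ∈ closure U, (g z).re ≤ 0 := by
  intro z hz
  have hexp : ‖exp (g z)‖ ≤ 1 :=
    norm_le_of_forall_mem_frontier_norm_le hU (differentiable_exp.comp_diffContOnCl hg)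
      (fun w hw => by simpa [norm_exp] using hb w hw) hz
  simpa [norm_exp] using hexp

theorem re_eq_zero_on_closure {g : E → ℂ} (hU : IsBounded U) (hg : DiffContOnCl ℂ g U)
    (hb : ∀ z ∈ frontier U, (g z).re = 0) : ∀ z ∈ closure U, (g z).re = 0 := by
  intro z hz
  have hneg := hg.neg.re_nonpos_on_closure hU (fun w hw => by simp [hb w hw]) z hz
  exact le_antisymm (hg.re_nonpos_on_closure hU (fun w hw => (hb w hw).le) z hz)
    (by simpa using hneg)

-- `p = conj q` means that `p - q` is imaginary and `p + q` is real.
theorem eqOn_conj_closure {p q : E → ℂ} (hU : IsBounded U) (hp : DiffContOnCl ℂ p U)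
    (hq : DiffContOnCl ℂ q U) (hb : EqOn p (conj ∘ q) (frontier U)) :
    EqOn p (conj ∘ q) (closure U) := by
  have hre := (hp.sub hq).re_eq_zero_on_closure hU fun w hw => by simp [hb hw]
  have him := ((hp.add hq).const_smul I).re_eq_zero_on_closure hU fun w hw => by simp [hb hw]
  intro z hz
  have h1 := hre z hz
  have h2 := him z hz
  simp only [Pi.sub_apply, Pi.add_apply, Pi.smul_apply, smul_eq_mul, sub_re, mul_re, I_re, I_im,
    add_im, zero_mul, one_mul, zero_sub, neg_eq_zero] at h1 h2
  apply Complex.ext <;> simp <;> linarith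

theorem mem_skewAdjoint_on_closure {m : Type*} {P : E → Matrix m m ℂ} (hU : IsBounded U)
    (hP : ∀ i j, DiffContOnCl ℂ (fun z => P z i j) U)
    (hb : ∀ z ∈ frontier U, P z ∈ skewAdjoint (Matrix m m ℂ)) :
    ∀ z ∈ closure U, P z ∈ skewAdjoint (Matrix m m ℂ) := by
  have mem_iff_entry (z : E) :
      P z ∈ skewAdjoint (Matrix m m ℂ) ↔ ∀ i j, P z i j = conj (-P z j i) := by
    simp only [skewAdjoint.mem_iff, Matrix.star_eq_conjTranspose, ← Matrix.ext_iff,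
      Matrix.conjTranspose_apply, Matrix.neg_apply, map_neg, RCLike.star_def]
    exact forall₂_congr fun i j => by
      rw [eq_neg_iff_add_eq_zero, eq_neg_iff_add_eq_zero, add_comm]
  intro z hz
  rw [mem_iff_entry]
  intro i j
  exact (hP i j).eqOn_conj_closure hU (hP j i).neg
    (fun w hw => (mem_iff_entry w).mp (hb w hw) i j) hz

end DiffContOnCl

section LinftyOpNorm

-- Any submultiplicative norm would do: it is only needed to differentiate `Ring.inverse`.
attribute [local instance] Matrix.linftyOpNormedRing Matrix.linftyOpNormedAlgebra

variable {E : Type*} [NormedAddCommGroup E] [NormedSpace ℂ E] {m : Type*} [Fintype m]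
  [DecidableEq m]

theorem differentiableOn_matrix_iff {F : E → Matrix m m ℂ} {s : Set E} :
    DifferentiableOn ℂ F s ↔ ∀ i j, DifferentiableOn ℂ (fun z => F z i j) s := by
  constructor
  · intro h i j
    exact (LinearMap.toContinuousLinearMap
      (Matrix.entryLinearMap ℂ ℂ i j)).differentiable.comp_differentiableOn h
  · intro h
    rw [show F = fun z => ∑ i, ∑ j, Matrix.singleLinearMap ℂ i j (F z i j) from
      funext fun z => Matrix.matrix_eq_sum_single (F z)]
    exact DifferentiableOn.fun_sum fun i _ => DifferentiableOn.fun_sum fun j _ =>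
      (LinearMap.toContinuousLinearMap (Matrix.singleLinearMap ℂ i j :
        ℂ →ₗ[ℂ] Matrix m m ℂ)).differentiable.comp_differentiableOn (h i j)

theorem DiffContOnCl.matrix_apply {F : E → Matrix m m ℂ} {s : Set E} (h : DiffContOnCl ℂ F s)
    (i j : m) : DiffContOnCl ℂ (fun z => F z i j) s :=
  (LinearMap.toContinuousLinearMap
    (Matrix.entryLinearMap ℂ ℂ i j)).differentiable.comp_diffContOnCl h

namespace CanonicalFactorization

variable {n : ℕ} {f : ℂ → Matrix (Fin n) (Fin n) ℂ} (c : CanonicalFactorization n f)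

noncomputable def transition (w : ℂ) : Matrix (Fin n) (Fin n) ℂ :=
  Ring.inverse (c.Fm w) * star (c.Fp (conj w))

theorem differentiableOn_star_Fp_conj :
    DifferentiableOn ℂ (fun w => star (c.Fp (conj w))) (ball 0 1) := by
  refine differentiableOn_matrix_iff.mpr fun i j w hw => ?_
  have hw' : conj w ∈ ball (0 : ℂ) 1 := by simpa using hw
  have hreflect := ((c.anal_p j i).differentiableAt (isOpen_ball.mem_nhds hw')).conj_conj
  rw [conj_conj] at hreflect
  exact hreflect.differentiableWithinAt

theorem diffContOnCl_transition : DiffContOnCl ℂ c.transition (ball 0 1) := by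
  have hFm : DifferentiableOn ℂ c.Fm (ball 0 1) := differentiableOn_matrix_iff.mpr c.anal_m
  refine ⟨(hFm.inverse fun w hw => c.unit_m w (ball_subset_closedBall hw)).mul
    c.differentiableOn_star_Fp_conj, ?_⟩
  rw [closure_ball 0 one_ne_zero]
  refine ContinuousOn.mul (fun w hw => ?_) ?_
  · have hinv := NormedRing.inverse_continuousAt (c.unit_m w hw).unit
    rw [IsUnit.unit_spec] at hinv
    exact hinv.comp_continuousWithinAt (c.contOn_m w hw)
  · exact continuous_id.matrix_conjTranspose.comp_continuousOn
      (c.contOn_p.comp continuous_conj.continuousOn fun w hw => by simpa using hw)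

end CanonicalFactorization

end LinftyOpNorm

namespace CanonicalFactorization

variable {n : ℕ} {f : ℂ → Matrix (Fin n) (Fin n) ℂ} (c : CanonicalFactorization n f)

theorem transition_mem_skewAdjoint_of_mem_sphere
    (hskew : ∀ z ∈ sphere (0 : ℂ) 1, f z ∈ skewAdjoint (Matrix (Fin n) (Fin n) ℂ))
    {w : ℂ} (hw : w ∈ sphere (0 : ℂ) 1) :
    c.transition w ∈ skewAdjoint (Matrix (Fin n) (Fin n) ℂ) := by
  have hw' : conj w ∈ sphere (0 : ℂ) 1 := by simpa using hw
  have hfactor : f (conj w) = c.Fm w * c.Fp (conj w) := by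
    rw [c.factor _ hw', inv_eq_conj (by simpa using hw'), conj_conj]
  rw [transition, ← mul_mem_skewAdjoint_iff (c.unit_m w (sphere_subset_closedBall hw)),
    ← hfactor]
  exact hskew _ hw'

theorem transition_mem_skewAdjoint
    (hskew : ∀ z ∈ sphere (0 : ℂ) 1, f z ∈ skewAdjoint (Matrix (Fin n) (Fin n) ℂ)) :
    ∀ w ∈ closedBall (0 : ℂ) 1, c.transition w ∈ skewAdjoint (Matrix (Fin n) (Fin n) ℂ) := by
  rw [← closure_ball 0 one_ne_zero]
  refine DiffContOnCl.mem_skewAdjoint_on_closure isBounded_ball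
    c.diffContOnCl_transition.matrix_apply fun w hw => ?_
  rw [frontier_ball 0 one_ne_zero] at hw
  exact c.transition_mem_skewAdjoint_of_mem_sphere hskew hw

end CanonicalFactorization

open Matrix in
/-- If `f : 𝕋 → GLₙ(ℂ)` takes values in skew-Hermitian invertible matrices and admits a
canonical factorization `f = f₋ f₊`, then the canonical extension `fᵉ(z) = f₋ᵉ(z̄⁻¹) f₊ᵉ(z)`
to the closed unit disk also takes values in skew-Hermitian invertible matrices. -/
theorem extension_skewHermitian {n : ℕ} (f : ℂ → Matrix (Fin n) (Fin n) ℂ)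
    (c : CanonicalFactorization n f)
    (hskew : ∀ z ∈ sphere (0 : ℂ) 1, (f z)ᴴ = -f z) :
    ∀ z ∈ closedBall (0 : ℂ) 1,
      (c.Fm (starRingEnd ℂ z) * c.Fp z)ᴴ = -(c.Fm (starRingEnd ℂ z) * c.Fp z) ∧
      IsUnit (c.Fm (starRingEnd ℂ z) * c.Fp z) := by
  intro z hz
  have hz' : conj z ∈ closedBall (0 : ℂ) 1 := by simpa using hz
  have hunit := c.unit_m _ hz'
  refine ⟨?_, hunit.mul (c.unit_p z hz)⟩
  rw [← star_eq_conjTranspose, ← skewAdjoint.mem_iff, mul_mem_skewAdjoint_iff hunit]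
  simpa [CanonicalFactorization.transition] using
    c.transition_mem_skewAdjoint (fun w hw => skewAdjoint.mem_iff.mpr (hskew w hw)) _ hz'
end

section
/- For f ∈ C(𝕋) a continuous function on the unit circle, the Toeplitz operator T_f = P M_f P on l²(ℤ≥0) (viewed inside l²(ℤ)) satisfies: T_{fg} − T_f T_g is compact for all f, g ∈ C(𝕋). In particular, if f is nowhere vanishing then T_f is Fredholm. -/
open Metric

/-- The `j`-th Fourier coefficient of a function `f` on the unit circle. -/
noncomputable def circleFourierCoeff (f : ℂ → ℂ) (j : ℤ) : ℂ :=
  (1 / (2 * Real.pi)) * ∫ θ in (0 : ℝ)..(2 * Real.pi),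
    f (Complex.exp (θ * Complex.I)) * Complex.exp (-((j : ℂ) * (θ : ℂ)) * Complex.I)

/-!
Under the Fourier basis, an operator with matrix `(ĥ (m - k))` is multiplication by `h` on
`L²(𝕋)`, so `h ↦ M_h` is a bounded unital algebra homomorphism `C(𝕋) → B(ℓ²(ℤ))`. As `P` is
idempotent, `P M_{fg} P - (P M_f P)(P M_g P) = P M_f ((1 - P) M_g P)`, so it suffices that the
Hankel-type operator `(1 - P) M_g P` is compact. For a monomial `g = zⁿ`, `M_g` is the shift by
`n` and `(1 - P) M_g P` has range supported in `[n, 0)`, hence finite rank. Compact operators form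
a closed subspace and trigonometric polynomials are dense in `C(𝕋)`, which gives all `g`. When `f`
does not vanish, `T_{1/f}` is a parametrix of `T_f` by the same identity with `f · (1/f) = 1`.
-/

open MeasureTheory ENNReal Real

local notation "ℓ²(ℤ)" => lp (fun _ : ℤ ↦ ℂ) 2

noncomputable section

section MultiplicationOperator

variable {α 𝕜 : Type*} [TopologicalSpace α] [CompactSpace α] [MeasurableSpace α] [BorelSpace α]
  (μ : Measure α) [IsFiniteMeasure μ] [RCLike 𝕜]

def multiplicationOperator : C(α, 𝕜) →L[𝕜] (Lp 𝕜 2 μ →L[𝕜] Lp 𝕜 2 μ) :=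
  (ContinuousLinearMap.mul 𝕜 𝕜).holderL μ ∞ 2 2 ∘L ContinuousMap.toLp ∞ μ 𝕜

lemma coeFn_multiplicationOperator_apply (h : C(α, 𝕜)) (F : Lp 𝕜 2 μ) :
    multiplicationOperator μ h F =ᵐ[μ] fun x ↦ h x * F x := by
  filter_upwards [(ContinuousLinearMap.mul 𝕜 𝕜).coeFn_holder (r := 2)
    (ContinuousMap.toLp ∞ μ 𝕜 h) F, ContinuousMap.coeFn_toLp (p := ∞) μ (𝕜 := 𝕜) h]
    with x hholder htoLp
  rw [← htoLp, ← ContinuousLinearMap.mul_apply' 𝕜, ← hholder]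
  rfl

lemma multiplicationOperator_mul (h₁ h₂ : C(α, 𝕜)) :
    multiplicationOperator μ (h₁ * h₂) =
      multiplicationOperator μ h₁ * multiplicationOperator μ h₂ := by
  ext1 F
  refine Lp.ext ?_
  filter_upwards [coeFn_multiplicationOperator_apply μ (h₁ * h₂) F,
    coeFn_multiplicationOperator_apply μ h₁ (multiplicationOperator μ h₂ F),
    coeFn_multiplicationOperator_apply μ h₂ F] with x e e₁ e₂
  simp [e, e₁, e₂, mul_assoc]

lemma multiplicationOperator_one : multiplicationOperator μ (1 : C(α, 𝕜)) = 1 := by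
  ext1 F
  refine Lp.ext ?_
  filter_upwards [coeFn_multiplicationOperator_apply μ 1 F] with x e
  simp [e]

end MultiplicationOperator

section LaurentOperator

variable {T : ℝ} [Fact (0 < T)]

def laurentOperator : C(AddCircle T, ℂ) →L[ℂ] (ℓ²(ℤ) →L[ℂ] ℓ²(ℤ)) :=
  fourierBasis.repr.toContinuousLinearEquiv.conjContinuousAlgEquiv.toContinuousLinearEquiv
    |>.toContinuousLinearMap |>.comp (multiplicationOperator AddCircle.haarAddCircle)

lemma laurentOperator_mul (h₁ h₂ : C(AddCircle T, ℂ)) :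
    laurentOperator (h₁ * h₂) = laurentOperator h₁ * laurentOperator h₂ := by
  simp [laurentOperator, multiplicationOperator_mul]

lemma laurentOperator_one : laurentOperator (1 : C(AddCircle T, ℂ)) = 1 := by
  simp [laurentOperator, multiplicationOperator_one]

lemma laurentOperator_apply_apply (h : C(AddCircle T, ℂ)) (v : ℓ²(ℤ)) (m : ℤ) :
    laurentOperator h v m = fourierCoeff (fun x ↦ h x * fourierBasis.repr.symm v x) m := by
  rw [← fourierCoeff_congr_ae (coeFn_multiplicationOperator_apply _ h _), ← fourierBasis_repr]
  rfl

lemma fourierCoeff_fourier_mul (G : AddCircle T → ℂ) (j m : ℤ) :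
    fourierCoeff (fun x ↦ fourier j x * G x) m = fourierCoeff G (m - j) := by
  simp only [fourierCoeff, smul_eq_mul, ← mul_assoc, ← fourier_add, neg_add_eq_sub, neg_sub]

lemma laurentOperator_fourier_apply_apply (n : ℤ) (v : ℓ²(ℤ)) (m : ℤ) :
    laurentOperator (fourier (T := T) n) v m = v (m - n) := by
  rw [laurentOperator_apply_apply, fourierCoeff_fourier_mul, ← fourierBasis_repr,
    LinearIsometryEquiv.apply_symm_apply]

lemma laurentOperator_single_apply (h : C(AddCircle T, ℂ)) (k m : ℤ) :
    laurentOperator h (lp.single 2 k 1) m = fourierCoeff h (m - k) := by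
  have hk : fourierBasis.repr.symm (lp.single 2 k 1) = fourierLp (T := T) 2 k := by
    rw [← coe_fourierBasis]
    exact fourierBasis.repr_symm_single k
  rw [laurentOperator_apply_apply, hk, ← fourierCoeff_fourier_mul]
  refine congrFun (fourierCoeff_congr_ae ?_) m
  filter_upwards [coeFn_fourierLp 2 k] with x hx
  rw [hx, mul_comm]

end LaurentOperator

lemma lp.isCompactOperator_of_finite_support {𝕜 ι E : Type*} {F : ι → Type*} [DecidableEq ι]
    [NontriviallyNormedField 𝕜] [NormedAddCommGroup E] [NormedSpace 𝕜 E]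
    [∀ i, NormedAddCommGroup (F i)] [∀ i, NormedSpace 𝕜 (F i)] [∀ i, LocallyCompactSpace (F i)]
    {p : ℝ≥0∞} [Fact (1 ≤ p)] (hp : p ≠ ∞) (s : Finset ι) (K : E →L[𝕜] lp F p)
    (hK : ∀ u, ∀ i ∉ s, K u i = 0) : IsCompactOperator K := by
  have hsum : K = ∑ i ∈ s, lp.singleContinuousLinearMap 𝕜 F p i ∘L lp.evalCLM 𝕜 F p i ∘L K := by
    ext1 u
    refine (lp.hasSum_single hp (K u)).unique ?_
    rw [sum_apply]
    exact hasSum_sum_of_ne_finset_zero fun i hi ↦ by simp [hK u i hi]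
  rw [hsum]
  refine Finset.sum_induction _ (fun A : E →L[𝕜] lp F p ↦ IsCompactOperator A)
    (fun _ _ ↦ .add) isCompactOperator_zero fun i _ ↦ ?_
  exact (isCompactOperator_of_locallyCompactSpace_rng
    (lp.singleContinuousLinearMap 𝕜 F p i)).comp_clm _

lemma semicommutator_eq_of_isIdempotentElem {R : Type*} [Ring R] {p : R}
    (hp : IsIdempotentElem p) (x y : R) :
    p * (x * y) * p - p * x * p * (p * y * p) = p * x * ((1 - p) * y * p) := by
  have : p * x * p * (p * y * p) = p * x * (p * p) * y * p := by noncomm_ring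
  rw [this, hp.eq]
  noncomm_ring

def IsRieszProjection (P : ℓ²(ℤ) →L[ℂ] ℓ²(ℤ)) : Prop :=
  ∀ u : ℓ²(ℤ), ∀ m : ℤ, P u m = if 0 ≤ m then u m else 0

section Toeplitz

variable {T : ℝ} [Fact (0 < T)] {P : ℓ²(ℤ) →L[ℂ] ℓ²(ℤ)}

lemma IsRieszProjection.isIdempotentElem (hP : IsRieszProjection P) : IsIdempotentElem P := by
  ext u m
  simp only [mul_apply_eq_comp, hP _ _]
  split_ifs <;> rfl

lemma IsRieszProjection.isCompactOperator_hankel_fourier (hP : IsRieszProjection P) (n : ℤ) :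
    IsCompactOperator ⇑((1 - P) * laurentOperator (fourier (T := T) n) * P) := by
  refine lp.isCompactOperator_of_finite_support ofNat_ne_top (Finset.Ico n 0) _
    fun u m hm ↦ ?_
  rw [Finset.mem_Ico] at hm
  simp only [mul_apply_eq_comp, sub_apply, one_apply_eq_self, lp.coeFn_sub, Pi.sub_apply, hP _ _,
    laurentOperator_fourier_apply_apply]
  split_ifs <;> first | exact sub_self _ | omega

lemma IsRieszProjection.isCompactOperator_hankel (hP : IsRieszProjection P)
    (h : C(AddCircle T, ℂ)) : IsCompactOperator ⇑((1 - P) * laurentOperator h * P) := by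
  let H := ContinuousLinearMap.mulLeftRight ℂ _ (1 - P) P ∘L laurentOperator (T := T)
  let S := (compactOperator (RingHom.id ℂ) ℓ²(ℤ) ℓ²(ℤ)).comap H.toLinearMap
  have hS : IsClosed (S : Set C(AddCircle T, ℂ)) :=
    isClosed_setOfPred_isCompactOperator.preimage H.continuous
  have hspan : Submodule.span ℂ (Set.range fourier) ≤ S :=
    Submodule.span_le.2 <| Set.range_subset_iff.2 hP.isCompactOperator_hankel_fourier
  have hS_top := Submodule.topologicalClosure_minimal _ hspan hS
  rw [span_fourier_closure_eq_top, top_le_iff] at hS_top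
  exact (hS_top ▸ Submodule.mem_top : h ∈ S)

lemma IsRieszProjection.isCompactOperator_semicommutator (hP : IsRieszProjection P)
    (h₁ h₂ : C(AddCircle T, ℂ)) :
    IsCompactOperator ⇑(P * laurentOperator (h₁ * h₂) * P -
      P * laurentOperator h₁ * P * (P * laurentOperator h₂ * P)) := by
  rw [laurentOperator_mul, semicommutator_eq_of_isIdempotentElem hP.isIdempotentElem]
  exact (hP.isCompactOperator_hankel h₂).clm_comp (P * laurentOperator h₁)

lemma IsRieszProjection.isCompactOperator_toeplitz_mul_sub_of_mul_eq_one
    (hP : IsRieszProjection P) {h₁ h₂ : C(AddCircle T, ℂ)} (h : h₁ * h₂ = 1) :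
    IsCompactOperator ⇑(P * laurentOperator h₁ * P * (P * laurentOperator h₂ * P) - P) := by
  have := (hP.isCompactOperator_semicommutator h₁ h₂).neg
  rw [h, laurentOperator_one, mul_one, hP.isIdempotentElem.eq] at this
  rwa [← neg_sub]

end Toeplitz

instance : Fact (0 < 2 * π) := ⟨two_pi_pos⟩

def circleSymbol (f : ℂ → ℂ) (hf : ContinuousOn f (sphere 0 1)) : C(AddCircle (2 * π), ℂ) :=
  ⟨fun x ↦ f (AddCircle.toCircle x), hf.comp_continuous
    (continuous_subtype_val.comp AddCircle.continuous_toCircle) fun x ↦ by simp [Circle.norm_coe]⟩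

lemma circleFourierCoeff_eq_fourierCoeff (f : ℂ → ℂ) (hf : ContinuousOn f (sphere 0 1)) (j : ℤ) :
    circleFourierCoeff f j = fourierCoeff (circleSymbol f hf) j := by
  rw [fourierCoeff_eq_intervalIntegral _ j 0, zero_add, circleFourierCoeff, Complex.real_smul]
  congr 1
  · push_cast
    rfl
  refine intervalIntegral.integral_congr fun θ _ ↦ ?_
  have hθ : (AddCircle.toCircle (θ : AddCircle (2 * π)) : ℂ) = Complex.exp (θ * Complex.I) := by
    rw [AddCircle.toCircle_apply_mk, div_self two_pi_pos.ne', one_mul, Circle.coe_exp]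
  simp only [circleSymbol, ContinuousMap.coe_mk, hθ, fourier_coe_apply, smul_eq_mul]
  rw [mul_comm]
  congr 2
  push_cast
  field_simp

lemma eq_laurentOperator_circleSymbol (f : ℂ → ℂ) (hf : ContinuousOn f (sphere 0 1))
    (M : ℓ²(ℤ) →L[ℂ] ℓ²(ℤ))
    (hM : ∀ u : ℓ²(ℤ), ∀ m : ℤ, M u m = ∑' k : ℤ, circleFourierCoeff f (m - k) * u k) :
    M = laurentOperator (circleSymbol f hf) := by
  refine lp.ext_continuousLinearMap ofNat_ne_top fun k ↦ ?_
  refine ContinuousLinearMap.ext_ring (lp.ext (funext fun m ↦ ?_))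
  simp only [ContinuousLinearMap.comp_apply, lp.singleContinuousLinearMap_apply, hM,
    laurentOperator_single_apply, circleFourierCoeff_eq_fourierCoeff f hf]
  rw [tsum_eq_single k fun j hj ↦ by rw [lp.single_apply_ne 2 k _ hj, mul_zero],
    lp.single_apply_self, mul_one]

end

/-- Semicommutator compactness for Toeplitz operators.  We work on `H = l²(ℤ)`, with `P`
the orthogonal projection onto `l²(ℤ≥0)` and `M_f` the multiplication operator (the Fourier
transform of multiplication by `f` on `L²(𝕋)`), characterized by its matrix of Fourier
coefficients.  For continuous `f, g` on the unit circle the semicommutator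
`T_{fg} − T_f T_g = P M_{fg} P − (P M_f P)(P M_g P)` is compact; in particular, if `f` is
nowhere vanishing on the circle, the Toeplitz operator `T_f = P M_f P` is Fredholm (it has
a parametrix supported on `l²(ℤ≥0)` inverting it there modulo compacts). -/
theorem toeplitz_semicommutator_compact
    (f g : ℂ → ℂ)
    (hf : ContinuousOn f (sphere 0 1)) (hg : ContinuousOn g (sphere 0 1))
    (P Mf Mg Mfg : lp (fun _ : ℤ => ℂ) 2 →L[ℂ] lp (fun _ : ℤ => ℂ) 2)
    (hP : ∀ u : lp (fun _ : ℤ => ℂ) 2, ∀ m : ℤ, P u m = if 0 ≤ m then u m else 0)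
    (hMf : ∀ u : lp (fun _ : ℤ => ℂ) 2, ∀ m : ℤ,
      Mf u m = ∑' k : ℤ, circleFourierCoeff f (m - k) * u k)
    (hMg : ∀ u : lp (fun _ : ℤ => ℂ) 2, ∀ m : ℤ,
      Mg u m = ∑' k : ℤ, circleFourierCoeff g (m - k) * u k)
    (hMfg : ∀ u : lp (fun _ : ℤ => ℂ) 2, ∀ m : ℤ,
      Mfg u m = ∑' k : ℤ, circleFourierCoeff (fun z => f z * g z) (m - k) * u k) :
    IsCompactOperator ⇑(P * Mfg * P - (P * Mf * P) * (P * Mg * P)) ∧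
    ((∀ z ∈ sphere (0 : ℂ) 1, f z ≠ 0) →
      ∃ Q : lp (fun _ : ℤ => ℂ) 2 →L[ℂ] lp (fun _ : ℤ => ℂ) 2,
        P * Q * P = Q ∧
        IsCompactOperator ⇑(Q * (P * Mf * P) - P) ∧
        IsCompactOperator ⇑((P * Mf * P) * Q - P)) := by
  replace hP : IsRieszProjection P := hP
  obtain rfl := eq_laurentOperator_circleSymbol f hf Mf hMf
  obtain rfl := eq_laurentOperator_circleSymbol g hg Mg hMg
  obtain rfl := eq_laurentOperator_circleSymbol _ (hf.mul hg) Mfg hMfg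
  set φ := circleSymbol f hf
  refine ⟨hP.isCompactOperator_semicommutator φ (circleSymbol g hg), fun hf₀ ↦ ?_⟩
  have hφ₀ : ∀ x, φ x ≠ 0 := fun x ↦ hf₀ _ (by simp [Circle.norm_coe])
  let ψ : C(AddCircle (2 * π), ℂ) := ⟨fun x ↦ (φ x)⁻¹, φ.continuous.inv₀ hφ₀⟩
  have hPP := hP.isIdempotentElem
  refine ⟨P * laurentOperator ψ * P, by simp only [← mul_assoc, hPP.eq, hPP.mul_mul_self],
    hP.isCompactOperator_toeplitz_mul_sub_of_mul_eq_one ?_,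
    hP.isCompactOperator_toeplitz_mul_sub_of_mul_eq_one ?_⟩
  all_goals ext x; simp [ψ, hφ₀ x]
end

section
/- The 2×2 matrix function f(z,w) = [[z, −w⁻¹],[w, z⁻¹]] on 𝕋² admits, for each fixed w ∈ 𝕋, the canonical factorization in the variable z: f(z,w) = [[1,0],[−w z⁻¹,1]] · [[z, −w⁻¹],[2w, 0]], where the first factor extends analytically and invertibly to the exterior disk in z and the second factor extends analytically and invertibly to the closed unit disk in z. -/
open Metric

/-- For every `w` on the unit circle, the matrix function
`f(z,w) = [[z, −w⁻¹],[w, z⁻¹]]` admits, in the variable `z`, the canonical factorization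
`f(z,w) = [[1,0],[−w z⁻¹,1]] · [[z, −w⁻¹],[2w, 0]]`: the first factor extends analytically
and invertibly to the exterior disk (encoded via `Fm u = [[1,0],[−w u,1]]`, i.e. the value
of the minus factor at `u⁻¹`), and the second factor is polynomial in `z`, hence extends
analytically and invertibly to the closed unit disk. -/
theorem bbh_canonical_factorization :
    ∀ w ∈ sphere (0 : ℂ) 1,
      ∃ c : CanonicalFactorization 2 (fun z => !![z, -w⁻¹; w, z⁻¹]),
        c.Fm = (fun u => !![1, 0; -w * u, 1]) ∧
        c.Fp = (fun z => !![z, -w⁻¹; 2 * w, 0]) := by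
  intro w hw
  have hw0 : w ≠ 0 := by
    intro h
    simp [h] at hw
  refine ⟨{ Fm := fun u => !![1, 0; -w * u, 1]
            Fp := fun z => !![z, -w⁻¹; 2 * w, 0]
            contOn_m := ?_
            contOn_p := ?_
            anal_m := ?_
            anal_p := ?_
            unit_m := ?_
            unit_p := ?_
            factor := ?_ }, rfl, rfl⟩
  · exact (continuous_matrix fun i j => by fin_cases i <;> fin_cases j <;> simp <;> fun_prop).continuousOn
  · exact (continuous_matrix fun i j => by fin_cases i <;> fin_cases j <;> simp <;> fun_prop).continuousOn
  · intro i j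
    fin_cases i <;> fin_cases j <;> simp <;> fun_prop
  · intro i j
    fin_cases i <;> fin_cases j <;> simp <;> fun_prop
  · intro z _
    rw [Matrix.isUnit_iff_isUnit_det]
    simp [Matrix.det_fin_two_of]
  · intro z _
    rw [Matrix.isUnit_iff_isUnit_det]
    have : (!![z, -w⁻¹; 2 * w, 0] : Matrix (Fin 2) (Fin 2) ℂ).det = 2 := by
      simp [Matrix.det_fin_two_of]
      field_simp
    rw [this]
    norm_num
  · intro z hz
    have hz0 : z ≠ 0 := by
      intro h
      simp [h] at hz
    ext i j
    fin_cases i <;> fin_cases j <;>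
      simp [Matrix.mul_apply, Fin.sum_univ_two] <;> field_simp <;> ring
end

section
/- The quarter-plane Toeplitz operator T^{0,∞}_f on l²(ℤ≥0 × ℤ≥0; ℂ²) with symbol f(z,w) = [[z, −w⁻¹],[w, z⁻¹]] is Fredholm of index 1. -/
/-!
Write `T = [[S₁, -S₂*], [S₂, S₁*]]`. Shifts in different variables commute and `S₁*S₁ = S₂*S₂ = 1`,
so `T T* = diag(2 - P_{m=0}, 2 - P_{n=0})`, where `P_{k=0}` projects onto the sites with `k = 0`.
This is invertible, hence `T* (T T*)⁻¹` is a bounded right inverse and `T` is onto. Solving `T u = 0`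
site by site shows that the kernel is spanned by `δ_{(0,0)} ⊗ e₁`. A surjection with
finite-dimensional kernel between Banach spaces is Fredholm (open mapping theorem, and
finite-dimensional subspaces are complemented), so `T` has a parametrix modulo finite-rank, hence
compact, operators, and its index is `1 - 0`.
-/

open Module

namespace ContinuousLinearMap

variable {𝕜 E F : Type*} [NontriviallyNormedField 𝕜]
  [NormedAddCommGroup E] [NormedSpace 𝕜 E] [NormedAddCommGroup F] [NormedSpace 𝕜 F]

theorem isCompactOperator_of_hasNoetherianRange [LocallyCompactSpace 𝕜] {f : E →L[𝕜] F}
    (hf : (f : E →ₗ[𝕜] F).HasNoetherianRange) : IsCompactOperator f := by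
  have := hf.isNoetherian_range
  have := FiniteDimensional.proper 𝕜 (LinearMap.range (f : E →ₗ[𝕜] F))
  exact (isCompactOperator_of_locallyCompactSpace_dom f.rangeRestrict).clm_comp
    (LinearMap.range (f : E →ₗ[𝕜] F)).subtypeL

open LinearMap.FiniteRangeSetoid in
theorem IsFredholm.exists_isCompactOperator_sub_id [CompleteSpace 𝕜] [LocallyCompactSpace 𝕜]
    {T : E →L[𝕜] F} (hT : T.IsFredholm) :
    ∃ S : F →L[𝕜] E, IsCompactOperator ⇑(S ∘L T - ContinuousLinearMap.id 𝕜 E) ∧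
      IsCompactOperator ⇑(T ∘L S - ContinuousLinearMap.id 𝕜 F) := by
  obtain ⟨S, hST, hTS⟩ := hT.exists_isQuasiInverse
  exact ⟨S, isCompactOperator_of_hasNoetherianRange (equiv_iff_hasNoetherianRange.mp hST.equiv),
    isCompactOperator_of_hasNoetherianRange (equiv_iff_hasNoetherianRange.mp hTS.equiv)⟩

theorem isFredholm_of_surjective [IsRCLikeNormedField 𝕜] [CompleteSpace E] [CompleteSpace F]
    {T : E →L[𝕜] F} (hT : Function.Surjective T)
    [FiniteDimensional 𝕜 (LinearMap.ker (T : E →ₗ[𝕜] F))] : T.IsFredholm where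
  isStrictMap := ((T.isOpenMap hT).isQuotientMap T.continuous hT).isStrictMap
  isClosed_range := by simp [LinearMap.range_eq_top.mpr hT]
  finite_ker := ‹_›
  finite_coker := by rw [LinearMap.range_eq_top.mpr hT]; exact Submodule.CoFG.top
  closedComplemented_ker := .of_finiteDimensional _

end ContinuousLinearMap

section Memℓp

variable {α β E : Type*} [NormedAddCommGroup E] {p : ENNReal}

theorem Memℓp.comp_injective (hp : 0 < p.toReal) {f : α → E} (hf : Memℓp f p) {g : β → α}
    (hg : g.Injective) : Memℓp (f ∘ g) p :=
  (memℓp_gen_iff hp).2 (((memℓp_gen_iff hp).1 hf).comp_injective hg)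

theorem Memℓp.of_comp_injective (hp : 0 < p.toReal) {f : α → E} {g : β → α} (hg : g.Injective)
    (hf : ∀ a ∉ Set.range g, f a = 0) (hfg : Memℓp (f ∘ g) p) : Memℓp f p := by
  rw [memℓp_gen_iff hp] at hfg ⊢
  refine (hg.summable_iff fun a ha => ?_).mp hfg
  simp [hf a ha, Real.zero_rpow hp.ne']

end Memℓp

theorem EuclideanSpace.norm_toLp_vecCons_le {𝕜 : Type*} [RCLike 𝕜] (a b : 𝕜) :
    ‖!₂[a, b]‖ ≤ ‖a‖ + ‖b‖ := by
  rw [EuclideanSpace.norm_eq, Real.sqrt_le_left (by positivity)]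
  simp only [Fin.sum_univ_two, Matrix.cons_val_zero, Matrix.cons_val_one, Matrix.cons_val_fin_one]
  nlinarith [norm_nonneg a, norm_nonneg b]

local notation "𝓗" => lp (fun _ : ℕ × ℕ => EuclideanSpace ℂ (Fin 2)) 2

namespace QuarterPlaneToeplitz

def action (u : ℕ × ℕ → EuclideanSpace ℂ (Fin 2)) (p : ℕ × ℕ) : EuclideanSpace ℂ (Fin 2) :=
  !₂[(if p.1 = 0 then 0 else u (p.1 - 1, p.2) 0) - u (p.1, p.2 + 1) 1,
    (if p.2 = 0 then 0 else u (p.1, p.2 - 1) 0) + u (p.1 + 1, p.2) 1]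

theorem action_single_zero_one (c : ℂ) :
    action (Pi.single (0, 0) (EuclideanSpace.single 1 c)) = 0 := by
  ext ⟨m, n⟩ i
  fin_cases i <;> simp [action, Pi.single_apply] <;> split_ifs <;> simp

theorem eq_single_of_action_eq_zero {u : ℕ × ℕ → EuclideanSpace ℂ (Fin 2)} (hu : action u = 0) :
    u = Pi.single (0, 0) (EuclideanSpace.single 1 (u (0, 0) 1)) := by
  have hcomp (p : ℕ × ℕ) (i : Fin 2) : action u p i = 0 := by simp [hu]
  have first_eq_zero (m n : ℕ) : u (m, n) 0 = 0 := by
    have h₀ := hcomp (m + 1, n) 0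
    have h₁ := hcomp (m, n + 1) 1
    simp [action] at h₀ h₁
    linear_combination (h₀ + h₁) / 2
  have second_eq_zero_of_snd_ne_zero (m n : ℕ) : u (m, n + 1) 1 = 0 := by
    simpa [action, first_eq_zero] using hcomp (m, n) 0
  have second_eq_zero_of_fst_ne_zero (m : ℕ) : u (m + 1, 0) 1 = 0 := by
    simpa [action] using hcomp (m, 0) 1
  ext ⟨m, n⟩ i
  fin_cases i <;> rcases m with _ | m <;> rcases n with _ | n <;> simp [*]

noncomputable def diagInv (k : ℕ) : ℂ := if k = 0 then 1 else 1 / 2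

theorem norm_diagInv_mul_apply_le (k : ℕ) (x : EuclideanSpace ℂ (Fin 2)) (i : Fin 2) :
    ‖diagInv k * x i‖ ≤ ‖x‖ := by
  rw [norm_mul, ← one_mul ‖x‖]
  gcongr
  · unfold diagInv
    split_ifs <;> norm_num
  · exact PiLp.norm_apply_le x i

/-- `T* (T T*)⁻¹`, where `(T T*)⁻¹` multiplies the two components at `(m, n)` by `diagInv m`
and `diagInv n`. -/
noncomputable def rightInverse (w : ℕ × ℕ → EuclideanSpace ℂ (Fin 2)) (p : ℕ × ℕ) :
    EuclideanSpace ℂ (Fin 2) :=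
  !₂[diagInv (p.1 + 1) * w (p.1 + 1, p.2) 0 + diagInv (p.2 + 1) * w (p.1, p.2 + 1) 1,
    (if p.2 = 0 then 0 else -(diagInv p.1 * w (p.1, p.2 - 1) 0)) +
      (if p.1 = 0 then 0 else diagInv p.2 * w (p.1 - 1, p.2) 1)]

theorem action_rightInverse (w : ℕ × ℕ → EuclideanSpace ℂ (Fin 2)) :
    action (rightInverse w) = w := by
  ext ⟨m, n⟩ i
  fin_cases i <;> [cases m; cases n] <;> simp [action, rightInverse, diagInv] <;> ring

theorem norm_rightInverse_le (w : ℕ × ℕ → EuclideanSpace ℂ (Fin 2)) (p : ℕ × ℕ) :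
    ‖rightInverse w p‖ ≤ ‖w (p.1 + 1, p.2)‖ + ‖w (p.1, p.2 + 1)‖ +
      ((if p.2 = 0 then 0 else ‖w (p.1, p.2 - 1)‖) +
        (if p.1 = 0 then 0 else ‖w (p.1 - 1, p.2)‖)) := by
  refine (EuclideanSpace.norm_toLp_vecCons_le _ _).trans (add_le_add ?_ ?_) <;>
    refine (norm_add_le _ _).trans (add_le_add ?_ ?_)
  all_goals first
    | exact norm_diagInv_mul_apply_le _ _ _
    | split_ifs <;> simp only [norm_zero, le_refl, norm_neg, norm_diagInv_mul_apply_le]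

theorem memℓp_rightInverse {w : ℕ × ℕ → EuclideanSpace ℂ (Fin 2)} (hw : Memℓp w 2) :
    Memℓp (rightInverse w) 2 := by
  have hp : 0 < (2 : ENNReal).toReal := by norm_num
  have hnorm : Memℓp (‖w ·‖) 2 := hw.norm
  have right : Memℓp (fun p : ℕ × ℕ => ‖w (p.1 + 1, p.2)‖) 2 :=
    hnorm.comp_injective hp (Nat.succ_injective.prodMap Function.injective_id)
  have up : Memℓp (fun p : ℕ × ℕ => ‖w (p.1, p.2 + 1)‖) 2 :=
    hnorm.comp_injective hp (Function.injective_id.prodMap Nat.succ_injective)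
  have down : Memℓp (fun p : ℕ × ℕ => if p.2 = 0 then 0 else ‖w (p.1, p.2 - 1)‖) 2 := by
    refine .of_comp_injective hp (Function.injective_id.prodMap Nat.succ_injective) ?_ hnorm
    rintro ⟨m, _ | n⟩ h
    · rfl
    · exact absurd ⟨(m, n), rfl⟩ h
  have left : Memℓp (fun p : ℕ × ℕ => if p.1 = 0 then 0 else ‖w (p.1 - 1, p.2)‖) 2 := by
    refine .of_comp_injective hp (Nat.succ_injective.prodMap Function.injective_id) ?_ hnorm
    rintro ⟨_ | m, n⟩ h
    · rfl
    · exact absurd ⟨(m, n), rfl⟩ h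
  exact ((right.add up).add (down.add left)).mono (norm_rightInverse_le w)

theorem coeFn_smul_single (c : ℂ) :
    ⇑(c • lp.single 2 (0, 0) (EuclideanSpace.single 1 1) : 𝓗) =
      Pi.single ((0, 0) : ℕ × ℕ) (EuclideanSpace.single (1 : Fin 2) c) := by
  rw [← lp.single_smul, lp.coeFn_single]
  congr 1
  ext i
  simp

variable {T : 𝓗 →L[ℂ] 𝓗}

theorem surjective_of_coeFn_apply_eq_action (hT : ∀ u, ⇑(T u) = action ⇑u) :
    Function.Surjective T := fun w =>
  ⟨⟨rightInverse ⇑w, memℓp_rightInverse (lp.memℓp w)⟩,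
    lp.ext ((hT _).trans (action_rightInverse ⇑w))⟩

theorem ker_eq_span_of_coeFn_apply_eq_action (hT : ∀ u, ⇑(T u) = action ⇑u) :
    LinearMap.ker (T : 𝓗 →ₗ[ℂ] 𝓗) = ℂ ∙ lp.single 2 (0, 0) (EuclideanSpace.single 1 1) := by
  ext u
  rw [LinearMap.mem_ker, Submodule.mem_span_singleton]
  constructor
  · intro hu
    refine ⟨u (0, 0) 1, lp.ext ?_⟩
    rw [coeFn_smul_single]
    exact (eq_single_of_action_eq_zero ((hT u).symm.trans (congrArg _ hu))).symm
  · rintro ⟨c, rfl⟩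
    exact lp.ext ((hT _).trans (by rw [coeFn_smul_single, action_single_zero_one]; rfl))

end QuarterPlaneToeplitz

open QuarterPlaneToeplitz in
/-- The quarter-plane Toeplitz operator on `l²(ℤ≥0 × ℤ≥0; ℂ²)` with symbol
`f(z,w) = [[z, −w⁻¹],[w, z⁻¹]]`, i.e. `T = [[S₁, −S₂*],[S₂, S₁*]]` in terms of the shift
operators `S₁, S₂` on the quarter lattice (Dirichlet boundary condition):
`(T u)(m,n)₀ = u(m−1,n)₀ − u(m,n+1)₁` and `(T u)(m,n)₁ = u(m,n−1)₀ + u(m+1,n)₁`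
(terms with negative indices being `0`).  This operator is Fredholm of index `1`. -/
theorem quarterPlane_toeplitz_index_one
    (T : lp (fun _ : ℕ × ℕ => EuclideanSpace ℂ (Fin 2)) 2 →L[ℂ]
      lp (fun _ : ℕ × ℕ => EuclideanSpace ℂ (Fin 2)) 2)
    (hT : ∀ u : lp (fun _ : ℕ × ℕ => EuclideanSpace ℂ (Fin 2)) 2, ∀ m n : ℕ,
      T u (m, n) 0 = (if m = 0 then 0 else u (m - 1, n) 0) - u (m, n + 1) 1 ∧
      T u (m, n) 1 = (if n = 0 then 0 else u (m, n - 1) 0) + u (m + 1, n) 1) :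
    (∃ S : lp (fun _ : ℕ × ℕ => EuclideanSpace ℂ (Fin 2)) 2 →L[ℂ]
        lp (fun _ : ℕ × ℕ => EuclideanSpace ℂ (Fin 2)) 2,
      IsCompactOperator ⇑(S * T - 1) ∧ IsCompactOperator ⇑(T * S - 1)) ∧
    FiniteDimensional ℂ (LinearMap.ker (T : lp (fun _ : ℕ × ℕ => EuclideanSpace ℂ (Fin 2)) 2
      →ₗ[ℂ] lp (fun _ : ℕ × ℕ => EuclideanSpace ℂ (Fin 2)) 2)) ∧
    FiniteDimensional ℂ (lp (fun _ : ℕ × ℕ => EuclideanSpace ℂ (Fin 2)) 2 ⧸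
      LinearMap.range (T : lp (fun _ : ℕ × ℕ => EuclideanSpace ℂ (Fin 2)) 2
        →ₗ[ℂ] lp (fun _ : ℕ × ℕ => EuclideanSpace ℂ (Fin 2)) 2)) ∧
    ((finrank ℂ (LinearMap.ker (T : lp (fun _ : ℕ × ℕ => EuclideanSpace ℂ (Fin 2)) 2
        →ₗ[ℂ] lp (fun _ : ℕ × ℕ => EuclideanSpace ℂ (Fin 2)) 2)) : ℤ) -
      (finrank ℂ (lp (fun _ : ℕ × ℕ => EuclideanSpace ℂ (Fin 2)) 2 ⧸
        LinearMap.range (T : lp (fun _ : ℕ × ℕ => EuclideanSpace ℂ (Fin 2)) 2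
          →ₗ[ℂ] lp (fun _ : ℕ × ℕ => EuclideanSpace ℂ (Fin 2)) 2)) : ℤ) = 1) := by
  have hact : ∀ u, ⇑(T u) = action ⇑u := fun u => by
    ext ⟨m, n⟩ i
    fin_cases i
    · exact (hT u m n).1
    · exact (hT u m n).2
  have hsurj := surjective_of_coeFn_apply_eq_action hact
  have hker := ker_eq_span_of_coeFn_apply_eq_action hact
  have hrange : LinearMap.range (T : 𝓗 →ₗ[ℂ] 𝓗) = ⊤ := LinearMap.range_eq_top.mpr hsurj
  have : FiniteDimensional ℂ (LinearMap.ker (T : 𝓗 →ₗ[ℂ] 𝓗)) := hker ▸ inferInstance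
  obtain ⟨S, hST, hTS⟩ :=
    (ContinuousLinearMap.isFredholm_of_surjective hsurj).exists_isCompactOperator_sub_id
  refine ⟨⟨S, hST, hTS⟩, this, by rw [hrange]; infer_instance, ?_⟩
  rw [hker, hrange, finrank_span_singleton, finrank_zero_of_subsingleton]
  · rfl
  · rw [← norm_ne_zero_iff, lp.norm_single (by norm_num)]
    simp
end
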